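/- arXiv:0804.4042 — 2 statements merged into one kernel-verified Lean document; each statement's English description precedes it below -/
import Mathlib

section
/- Let C be a binary linear code of minimum distance d with coset leaders chosen as ⪯-minimum elements, and let T be a trial set for C. Then the uncorrectable errors of weight ⌈d/2⌉ are exactly the minimal uncorrectable errors of that weight and exactly the larger halves of weight ⌈d/2⌉ of codewords in T: M^1_{⌈d/2⌉}(C) = LH_{⌈d/2⌉}(T) = E^1_{⌈d/2⌉}(C). -/
/-- Support of a binary vector: the set of nonzero coordinates. -/
def supp {n : ℕ} (x : Fin n → ZMod 2) : Finset (Fin n) :=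
  Finset.univ.filter (fun i => x i ≠ 0)

/-- Hamming weight. -/
def wt {n : ℕ} (x : Fin n → ZMod 2) : ℕ := (supp x).card

/-- Numerical value v(x) = Σ_{i=1}^n x_i 2^(n-i) (0-based: exponent n-1-i). -/
def nval {n : ℕ} (x : Fin n → ZMod 2) : ℕ :=
  ∑ i : Fin n, (x i).val * 2 ^ (n - 1 - (i : ℕ))

/-- The total order ⪯ : first by weight, ties broken by numerical value. -/
def ple {n : ℕ} (x y : Fin n → ZMod 2) : Prop :=
  wt x < wt y ∨ (wt x = wt y ∧ nval x ≤ nval y)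

/-- The strict version ≺ of ⪯. -/
def plt {n : ℕ} (x y : Fin n → ZMod 2) : Prop := ple x y ∧ x ≠ y

/-- Covering order: x ⊆ y iff S(x) ⊆ S(y). -/
def covers {n : ℕ} (x y : Fin n → ZMod 2) : Prop := supp x ⊆ supp y

/-- v is the coset leader of its coset of C, i.e. the ⪯-minimum element
(u ranges over the coset of v: u + v ∈ C). -/
def IsCosetLeader {n : ℕ} (C : Submodule (ZMod 2) (Fin n → ZMod 2))
    (v : Fin n → ZMod 2) : Prop :=
  ∀ u, u + v ∈ C → ple v u

/-- E⁰(C): the set of correctable errors (coset leaders). -/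
def E0 {n : ℕ} (C : Submodule (ZMod 2) (Fin n → ZMod 2)) : Set (Fin n → ZMod 2) :=
  {v | IsCosetLeader C v}

/-- E¹(C): the set of uncorrectable errors. -/
def E1 {n : ℕ} (C : Submodule (ZMod 2) (Fin n → ZMod 2)) : Set (Fin n → ZMod 2) :=
  {v | ¬ IsCosetLeader C v}

/-- M¹(C): the ⊆-minimal elements of E¹(C). -/
def M1 {n : ℕ} (C : Submodule (ZMod 2) (Fin n → ZMod 2)) : Set (Fin n → ZMod 2) :=
  {v ∈ E1 C | ∀ u ∈ E1 C, covers u v → u = v}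

/-- v is a larger half of c: v is ⊆-minimal among vectors u with u + c ≺ u. -/
def IsLH {n : ℕ} (c v : Fin n → ZMod 2) : Prop :=
  plt (v + c) v ∧ ∀ u, plt (u + c) u → covers u v → u = v

/-- LH(c): the set of larger halves of c. -/
def LH {n : ℕ} (c : Fin n → ZMod 2) : Set (Fin n → ZMod 2) := {v | IsLH c v}

/-- LH(U) = ∪_{c ∈ U} LH(c). -/
def LHset {n : ℕ} (U : Set (Fin n → ZMod 2)) : Set (Fin n → ZMod 2) :=
  ⋃ c ∈ U, LH c

/-- LH⁻(c): larger halves of c of weight w(c)/2 (for even-weight c). -/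
def LHm {n : ℕ} (c : Fin n → ZMod 2) : Set (Fin n → ZMod 2) :=
  {v ∈ LH c | 2 * wt v = wt c}

/-- A_i(U): elements of U of weight i. -/
def Aw {n : ℕ} (U : Set (Fin n → ZMod 2)) (i : ℕ) : Set (Fin n → ZMod 2) :=
  {v ∈ U | wt v = i}

/-- C has minimum distance d. -/
def HasMinDist {n : ℕ} (C : Submodule (ZMod 2) (Fin n → ZMod 2)) (d : ℕ) : Prop :=
  (∃ c ∈ C, c ≠ 0 ∧ wt c = d) ∧ ∀ c ∈ C, c ≠ 0 → d ≤ wt c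

/-- T is a trial set for C. -/
def IsTrialSet {n : ℕ} (C : Submodule (ZMod 2) (Fin n → ZMod 2))
    (T : Set (Fin n → ZMod 2)) : Prop :=
  T ⊆ (C : Set (Fin n → ZMod 2)) \ {0} ∧ M1 C ⊆ LHset T

/-- l(x) = min S(x), the leftmost nonzero coordinate (⊤ if x = 0). -/
def lm {n : ℕ} (x : Fin n → ZMod 2) : WithTop (Fin n) := (supp x).min

/-- The coordinatewise "and" of two vectors: support is S(x) ∩ S(y). -/
def vand {n : ℕ} (x y : Fin n → ZMod 2) : Fin n → ZMod 2 := fun i => x i * y i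

-- Auxiliary lemmas for stmt4

lemma mem_supp' {n : ℕ} {x : Fin n → ZMod 2} {i : Fin n} :
    i ∈ supp x ↔ x i ≠ 0 := by simp [supp]

lemma eq_of_supp_eq {n : ℕ} {x y : Fin n → ZMod 2} (h : supp x = supp y) : x = y := by
  funext i
  have h1 : ∀ a : ZMod 2, a ≠ 0 → a = 1 := by decide
  by_cases hx : x i = 0
  · have hni : i ∉ supp y := h ▸ (by simp [mem_supp', hx])
    have hy : y i = 0 := by simpa [mem_supp'] using hni
    rw [hx, hy]
  · have hm : i ∈ supp y := h ▸ mem_supp'.2 hx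
    rw [h1 _ hx, h1 _ (mem_supp'.1 hm)]

lemma nval_eq_sum_supp {n : ℕ} (x : Fin n → ZMod 2) :
    nval x = ∑ i ∈ supp x, 2 ^ (n - 1 - (i : ℕ)) := by
  rw [nval, ← Finset.sum_subset (Finset.subset_univ (supp x))
    (fun i _ hi => by
      have : x i = 0 := by simpa [mem_supp'] using hi
      simp [this])]
  refine Finset.sum_congr rfl (fun i hi => ?_)
  have h1 : ∀ a : ZMod 2, a ≠ 0 → a.val = 1 := by decide
  rw [h1 _ (mem_supp'.1 hi), one_mul]

lemma nval_injective {n : ℕ} : Function.Injective (nval (n := n)) := by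
  intro x y h
  apply eq_of_supp_eq
  have hinj : Function.Injective (fun i : Fin n => n - 1 - (i : ℕ)) := by
    intro a b hab
    simp only at hab
    have := a.isLt; have := b.isLt
    ext; omega
  have hx : nval x = ∑ j ∈ (supp x).image (fun i : Fin n => n - 1 - (i:ℕ)), 2 ^ j := by
    rw [nval_eq_sum_supp, Finset.sum_image (fun a _ b _ hab => hinj hab)]
  have hy : nval y = ∑ j ∈ (supp y).image (fun i : Fin n => n - 1 - (i:ℕ)), 2 ^ j := by
    rw [nval_eq_sum_supp, Finset.sum_image (fun a _ b _ hab => hinj hab)]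
  have himg := Finset.geomSum_injective (le_refl 2)
    (show ∑ i ∈ (supp x).image (fun i : Fin n => n - 1 - (i:ℕ)), 2 ^ i
        = ∑ i ∈ (supp y).image (fun i : Fin n => n - 1 - (i:ℕ)), 2 ^ i by
      rw [← hx, ← hy]; exact h)
  exact Finset.image_injective hinj himg

lemma ple_refl {n : ℕ} (x : Fin n → ZMod 2) : ple x x := Or.inr ⟨rfl, le_rfl⟩

lemma ple_antisymm {n : ℕ} {x y : Fin n → ZMod 2} (h1 : ple x y) (h2 : ple y x) : x = y := by
  rcases h1 with h1 | ⟨hw1, hn1⟩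
  · rcases h2 with h2 | ⟨hw2, _⟩ <;> omega
  · rcases h2 with h2 | ⟨_, hn2⟩
    · omega
    · exact nval_injective (le_antisymm hn1 hn2)

lemma ple_total {n : ℕ} {x y : Fin n → ZMod 2} (h : ¬ ple x y) : ple y x := by
  rw [ple] at h ⊢
  push_neg at h
  obtain ⟨hw, hn⟩ := h
  rcases Nat.lt_or_ge (wt y) (wt x) with h' | h'
  · exact Or.inl h'
  · exact Or.inr ⟨by omega, le_of_lt (hn (by omega))⟩

lemma wt_add_le {n : ℕ} (x y : Fin n → ZMod 2) : wt (x + y) ≤ wt x + wt y := by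
  have hsub : supp (x + y) ⊆ supp x ∪ supp y := by
    intro i hi
    rw [mem_supp'] at hi
    rw [Finset.mem_union, mem_supp', mem_supp']
    by_contra hc
    push_neg at hc
    exact hi (by simp [Pi.add_apply, hc.1, hc.2])
  calc (supp (x + y)).card ≤ (supp x ∪ supp y).card := Finset.card_le_card hsub
    _ ≤ wt x + wt y := Finset.card_union_le _ _

lemma add_self_vec {n : ℕ} (x : Fin n → ZMod 2) : x + x = 0 := by
  funext i
  exact CharTwo.add_self_eq_zero (x i)

lemma eq_of_add_eq_zero_vec {n : ℕ} {x y : Fin n → ZMod 2} (h : x + y = 0) : x = y := by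
  have := congrArg (· + y) h
  simpa [add_assoc, add_self_vec] using this

/-- Every vector of weight < ⌈d/2⌉ is a coset leader. -/
lemma leader_of_small {n : ℕ} {C : Submodule (ZMod 2) (Fin n → ZMod 2)} {d : ℕ}
    (hd : ∀ c ∈ C, c ≠ 0 → d ≤ wt c) {v : Fin n → ZMod 2}
    (hv : wt v < (d + 1) / 2) : IsCosetLeader C v := by
  intro u hu
  by_cases huv : u = v
  · subst huv; exact ple_refl u
  by_contra hn
  have hle := ple_total hn
  have hwu : wt u ≤ wt v := by
    rcases hle with h | ⟨h, _⟩ <;> omega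
  have hne : u + v ≠ 0 := fun h => huv (eq_of_add_eq_zero_vec h)
  have hdle : d ≤ wt (u + v) := hd _ hu hne
  have := wt_add_le u v
  omega

/-- Larger halves of nonzero codewords are uncorrectable. -/
lemma LH_subset_E1 {n : ℕ} {C : Submodule (ZMod 2) (Fin n → ZMod 2)}
    {c : Fin n → ZMod 2} (hc : c ∈ C) (hc0 : c ≠ 0) : LH c ⊆ E1 C := by
  intro v hv
  obtain ⟨⟨hple, hne⟩, _⟩ := hv
  intro hleader
  have hmem : (v + c) + v ∈ C := by
    have : (v + c) + v = c := by
      rw [add_comm v c, add_assoc, add_self_vec, add_zero]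
    rw [this]; exact hc
  exact hne (ple_antisymm hple (hleader _ hmem))

/-- M¹_{⌈d/2⌉}(C) = LH_{⌈d/2⌉}(T) = E¹_{⌈d/2⌉}(C). -/
theorem stmt4 {n : ℕ} (C : Submodule (ZMod 2) (Fin n → ZMod 2)) (d : ℕ)
    (hd : HasMinDist C d) (T : Set (Fin n → ZMod 2)) (hT : IsTrialSet C T) :
    Aw (M1 C) ((d + 1) / 2) = Aw (LHset T) ((d + 1) / 2) ∧
    Aw (LHset T) ((d + 1) / 2) = Aw (E1 C) ((d + 1) / 2) := by
  set k := (d + 1) / 2 with hk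
  have hE1M1 : Aw (E1 C) k ⊆ Aw (M1 C) k := by
    rintro v ⟨hv, hw⟩
    refine ⟨⟨hv, ?_⟩, hw⟩
    intro u hu hcov
    by_contra hne
    have hss : supp u ⊂ supp v :=
      lt_of_le_of_ne hcov (fun h => hne (eq_of_supp_eq h))
    have hwu : wt u < k := hw ▸ Finset.card_lt_card hss
    exact hu (leader_of_small hd.2 hwu)
  have hM1LH : Aw (M1 C) k ⊆ Aw (LHset T) k := fun v hv => ⟨hT.2 hv.1, hv.2⟩
  have hLHE1 : Aw (LHset T) k ⊆ Aw (E1 C) k := by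
    rintro v ⟨hv, hw⟩
    obtain ⟨c, hcT, hvc⟩ := Set.mem_iUnion₂.1 hv
    have hcC := hT.1 hcT
    have hc0 : c ≠ 0 := fun h => hcC.2 (by simp [h])
    exact ⟨LH_subset_E1 hcC.1 hc0 hvc, hw⟩
  have hME : Aw (M1 C) k ⊆ Aw (E1 C) k := fun v hv => ⟨hv.1.1, hv.2⟩
  refine ⟨Set.Subset.antisymm hM1LH (hLHE1.trans hE1M1), ?_⟩
  exact Set.Subset.antisymm hLHE1 (hE1M1.trans hM1LH)
end

section
/- (Lemma 2) Let C be a binary linear code with even minimum distance d. For every two distinct codewords c_1, c_2 of weight d in C, the set LH^-(c_1) ∩ LH^-(c_2) has at most one element, where LH^-(c) denotes the set of larger halves of c of weight d/2. -/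
lemma zmod2_ne_zero' {a : ZMod 2} (h : a ≠ 0) : a = 1 := by revert h; revert a; decide

lemma zmod2_add_eq_zero' {a b : ZMod 2} (h : a + b = 0) : a = b := by
  revert h; revert a b; decide

lemma supp_add' {n : ℕ} (x y : Fin n → ZMod 2) :
    supp (x + y) = symmDiff (supp x) (supp y) := by
  ext i
  simp only [mem_supp', Finset.mem_symmDiff, Pi.add_apply]
  rcases (show x i = 0 ∨ x i = 1 by generalize x i = a; revert a; decide) with h | h <;>
  rcases (show y i = 0 ∨ y i = 1 by generalize y i = a; revert a; decide) with g | g <;>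
    simp [h, g]
  · decide

lemma card_symmDiff' {α : Type*} [DecidableEq α] (s t : Finset α) :
    (symmDiff s t).card + 2 * (s ∩ t).card = s.card + t.card := by
  have h1 : (s \ t).card + (s ∩ t).card = s.card := Finset.card_sdiff_add_card_inter s t
  have h2 : (t \ s).card + (t ∩ s).card = t.card := Finset.card_sdiff_add_card_inter t s
  have h3 : (symmDiff s t).card = (s \ t).card + (t \ s).card := by
    rw [symmDiff_def, Finset.sup_eq_union]
    exact Finset.card_union_of_disjoint (disjoint_sdiff_sdiff)
  rw [Finset.inter_comm t s] at h2
  omega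

lemma nval_split' {n : ℕ} (x : Fin n → ZMod 2) (i : Fin n) :
    nval x = (x i).val * 2 ^ (n - 1 - (i:ℕ)) +
      nval (fun j => if j = i then 0 else x j) := by
  unfold nval
  rw [← Finset.add_sum_erase _ _ (Finset.mem_univ i)]
  congr 1
  exact (Finset.sum_congr rfl fun j hj => by
    simp [Finset.ne_of_mem_erase hj]).trans (Finset.sum_erase _ (by simp))

lemma supp_subset_of_isLH' {n : ℕ} {c v : Fin n → ZMod 2} (h : IsLH c v) :
    supp v ⊆ supp c := by
  intro i hiv
  by_contra hic
  have hci : c i = 0 := not_not.1 (fun hh => hic (mem_supp'.2 hh))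
  have hvi : v i ≠ 0 := mem_supp'.1 hiv
  set u : Fin n → ZMod 2 := fun j => if j = i then 0 else v j with hu
  have hcne : c ≠ 0 := by
    intro h0; exact h.1.2 (by simp [h0])
  have huv : u + c = fun j => if j = i then 0 else (v + c) j := by
    funext j; by_cases hj : j = i <;> simp [hu, hj, hci]
  have hsu : supp u = (supp v).erase i := by
    ext j; by_cases hj : j = i <;> simp [mem_supp', hu, hj, Finset.mem_erase]
  have hsuc : supp (u + c) = (supp (v + c)).erase i := by
    rw [huv]; ext j; by_cases hj : j = i <;> simp [mem_supp', hj, Finset.mem_erase]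
  have hivc : i ∈ supp (v + c) := by
    simp only [mem_supp', Pi.add_apply, hci, add_zero]; exact hvi
  have hwu : wt u + 1 = wt v := by
    simp only [wt]; rw [hsu, Finset.card_erase_add_one hiv]
  have hwuc : wt (u + c) + 1 = wt (v + c) := by
    simp only [wt]; rw [hsuc, Finset.card_erase_add_one hivc]
  have hnv : nval v = (v i).val * 2 ^ (n - 1 - (i:ℕ)) + nval u := nval_split' v i
  have hnvc : nval (v + c) = ((v + c) i).val * 2 ^ (n - 1 - (i:ℕ)) + nval (u + c) := by
    conv_lhs => rw [nval_split' (v + c) i]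
    rw [huv]
  have hval : ((v + c) i).val = (v i).val := by simp [hci]
  rw [hval] at hnvc
  have hplt : plt (u + c) u := by
    refine ⟨?_, ?_⟩
    · rcases h.1.1 with hlt | ⟨heq, hle⟩
      · left; omega
      · right; exact ⟨by omega, by omega⟩
    · intro he
      apply hcne
      funext j
      have hj := congrFun he j
      simp only [Pi.add_apply] at hj
      have : u j + c j = u j + 0 := by simpa using hj
      simpa using add_left_cancel this
  have hcov : covers u v := by
    rw [covers, hsu]; exact Finset.erase_subset _ _
  have heq := h.2 u hplt hcov
  have := congrFun heq i
  simp [hu] at this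
  exact hvi this.symm

lemma supp_eq_inter' {n : ℕ} (C : Submodule (ZMod 2) (Fin n → ZMod 2)) (d : ℕ)
    (hd : HasMinDist C d)
    (c1 c2 : Fin n → ZMod 2) (h1 : c1 ∈ C) (h2 : c2 ∈ C)
    (hw1 : wt c1 = d) (hw2 : wt c2 = d) (hne : c1 ≠ c2)
    (w : Fin n → ZMod 2) (hw : w ∈ LHm c1 ∩ LHm c2) :
    supp w = supp c1 ∩ supp c2 := by
  obtain ⟨⟨hl1, hww1⟩, ⟨hl2, hww2⟩⟩ := hw
  have hs1 : supp w ⊆ supp c1 := supp_subset_of_isLH' hl1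
  have hs2 : supp w ⊆ supp c2 := supp_subset_of_isLH' hl2
  have hsub : supp w ⊆ supp c1 ∩ supp c2 := Finset.subset_inter hs1 hs2
  have hmem : c1 + c2 ∈ C := add_mem h1 h2
  have hne0 : c1 + c2 ≠ 0 := by
    intro h0
    exact hne (funext fun j => zmod2_add_eq_zero' (congrFun h0 j))
  have hmind : d ≤ wt (c1 + c2) := hd.2 _ hmem hne0
  have hcard : wt (c1 + c2) + 2 * (supp c1 ∩ supp c2).card = wt c1 + wt c2 := by
    rw [wt, supp_add']
    exact card_symmDiff' _ _
  have hle : wt w ≤ (supp c1 ∩ supp c2).card := Finset.card_le_card hsub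
  exact Finset.eq_of_subset_of_card_le hsub (by
    change (supp c1 ∩ supp c2).card ≤ wt w
    omega)

/-- Lemma 2: |LH⁻(c₁) ∩ LH⁻(c₂)| ≤ 1 for distinct minimum-weight
codewords, d even. -/
theorem stmt11 {n : ℕ} (C : Submodule (ZMod 2) (Fin n → ZMod 2)) (d : ℕ)
    (hd : HasMinDist C d) (heven : Even d)
    (c1 c2 : Fin n → ZMod 2) (h1 : c1 ∈ C) (h2 : c2 ∈ C)
    (hw1 : wt c1 = d) (hw2 : wt c2 = d) (hne : c1 ≠ c2) :
    (LHm c1 ∩ LHm c2).Subsingleton := by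
  intro v hv v' hv'
  have e1 := supp_eq_inter' C d hd c1 c2 h1 h2 hw1 hw2 hne v hv
  have e2 := supp_eq_inter' C d hd c1 c2 h1 h2 hw1 hw2 hne v' hv'
  have hsupp : supp v = supp v' := e1.trans e2.symm
  funext i
  by_cases hi : i ∈ supp v
  · have hi' : i ∈ supp v' := hsupp ▸ hi
    rw [zmod2_ne_zero' (mem_supp'.1 hi), zmod2_ne_zero' (mem_supp'.1 hi')]
  · have hi' : i ∉ supp v' := hsupp ▸ hi
    have h1' : v i = 0 := not_not.1 (fun hh => hi (mem_supp'.2 hh))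
    have h2' : v' i = 0 := not_not.1 (fun hh => hi' (mem_supp'.2 hh))
    rw [h1', h2']
end
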